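/- Assume additionally a ≠ 1 and let S(X) = ∑_{n≥0} B_n h_n(X) for X > 4(2+√5). Set G₂(0) = (2^{a−1} π / sin(πa/2)) · Γ(3/2) Γ(b+1) / (Γ(a) Γ((3−a)/2) Γ(b+1−a/2)) and C₁ = (a−1) tan(πa/2) · Γ((3−a)/2) Γ(b+2−a/2) / (Γ(2−a/2) Γ(b+3/2−a/2)). Then lim_{X→∞} X^{a/2} S(X) = G₂(0), and lim_{X→∞} X^{(a+1)/2} ( S(X) − G₂(0) X^{−a/2} ) = G₂(0) · C₁. -/

import Mathlib

/-- Pochhammer symbol (rising factorial) for a real argument. -/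
noncomputable def poch (x : ℝ) (n : ℕ) : ℝ := (ascPochhammer ℝ n).eval x

/-- The coefficients `B_n = (1/2)_n (a)_n (b)_n / ((3/2)_n (b+1)_n n!)`. -/
noncomputable def coeffB (a b : ℝ) (n : ℕ) : ℝ :=
  poch (1 / 2) n * poch a n * poch b n /
    (poch (3 / 2) n * poch (b + 1) n * (Nat.factorial n : ℝ))

/-- `f_n^{(2)}(X) = X^{−(a+n)/2} ₂F₁((a−1−n)/2, (a−2b−n)/2; 1/2; −1/X)`. -/
noncomputable def f2 (a b : ℝ) (n : ℕ) (X : ℝ) : ℝ :=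
  X ^ (-((a + n) / 2)) *
    ∑' j : ℕ, poch ((a - 1 - n) / 2) j * poch ((a - 2 * b - n) / 2) j /
      (poch (1 / 2) j * (Nat.factorial j : ℝ)) * (-1 / X) ^ j

/-- `f_n^{(3)}(X) = X^{−(a+n+1)/2} ₂F₁((a−n)/2, (a−2b+1−n)/2; 3/2; −1/X)`. -/
noncomputable def f3 (a b : ℝ) (n : ℕ) (X : ℝ) : ℝ :=
  X ^ (-((a + n + 1) / 2)) *
    ∑' j : ℕ, poch ((a - n) / 2) j * poch ((a - 2 * b + 1 - n) / 2) j /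
      (poch (3 / 2) j * (Nat.factorial j : ℝ)) * (-1 / X) ^ j

/-- The connection coefficient `G₂(n)`. -/
noncomputable def G2 (a b : ℝ) (n : ℕ) : ℝ :=
  (2 : ℝ) ^ (a + n - 1) * Real.pi / Real.sin (Real.pi * ((a + n) / 2)) *
    (Real.Gamma (n + 3 / 2) * Real.Gamma (n + b + 1) /
      (Real.Gamma (n + a) * Real.Gamma (3 / 2 + (n - a) / 2) *
        Real.Gamma (b + 1 + (n - a) / 2)))

/-- The connection coefficient `G₃(n)`. -/
noncomputable def G3 (a b : ℝ) (n : ℕ) : ℝ :=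
  -((2 : ℝ) ^ (a + n) * Real.pi / Real.cos (Real.pi * ((a + n) / 2))) *
    (Real.Gamma (n + 3 / 2) * Real.Gamma (n + b + 1) /
      (Real.Gamma (n + a) * Real.Gamma (1 + (n - a) / 2) *
        Real.Gamma (b + 1 / 2 + (n - a) / 2)))

/-- `h_n(X) = G₂(n) f_n^{(2)}(X) + G₃(n) f_n^{(3)}(X)`. -/
noncomputable def hfun (a b : ℝ) (n : ℕ) (X : ℝ) : ℝ :=
  G2 a b n * f2 a b n X + G3 a b n * f3 a b n X

/-- `S(X) = ∑_{n≥0} B_n h_n(X)`. -/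
noncomputable def Sfun (a b : ℝ) (X : ℝ) : ℝ := ∑' n : ℕ, coeffB a b n * hfun a b n X


open Real Filter Topology


lemma poch_zero (x : ℝ) : poch x 0 = 1 := by simp [poch]
lemma poch_succ (x : ℝ) (n : ℕ) : poch x (n+1) = poch x n * (x + n) := by
  simp [poch, ascPochhammer_succ_right]
lemma poch_one (x : ℝ) : poch x 1 = x := by simp [poch]

lemma poch_pos {x : ℝ} (hx : 0 < x) (n : ℕ) : 0 < poch x n := by
  induction n with
  | zero => simp [poch_zero]
  | succ k ih => rw [poch_succ]; positivity

lemma abs_poch_le {x W : ℝ} (hx : |x| ≤ W) (n : ℕ) : |poch x n| ≤ (W + n) ^ n := by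
  have hW : 0 ≤ W := le_trans (abs_nonneg x) hx
  induction n with
  | zero => simp [poch_zero]
  | succ k ih =>
      rw [poch_succ, abs_mul]
      have h1 : (W + k) ^ k ≤ (W + (k+1)) ^ k := by
        apply pow_le_pow_left₀ (by positivity) (by push_cast; linarith) k
      have h2 : |x + (k:ℝ)| ≤ W + ((k:ℝ)+1) := by
        calc |x + (k:ℝ)| ≤ |x| + |(k:ℝ)| := abs_add_le _ _
        _ ≤ W + ((k:ℝ)+1) := by rw [abs_of_nonneg (by positivity : (0:ℝ) ≤ (k:ℝ))]; linarith
      have : |poch x k| * |x + (k:ℝ)| ≤ (W + ((k:ℝ)+1))^k * (W + ((k:ℝ)+1)) :=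
        mul_le_mul (le_trans ih h1) h2 (abs_nonneg _) (by positivity)
      calc |poch x k| * |x + (k:ℝ)| ≤ (W + ((k:ℝ)+1))^k * (W + ((k:ℝ)+1)) := this
      _ = (W + ((k+1:ℕ):ℝ))^(k+1) := by push_cast; ring

lemma abs_poch_le_poch {x y : ℝ} (h : ∀ i : ℕ, |x + i| ≤ y + i) (n : ℕ) :
    |poch x n| ≤ poch y n := by
  induction n with
  | zero => simp [poch_zero]
  | succ k ih =>
      rw [poch_succ, poch_succ, abs_mul]
      exact mul_le_mul ih (h k) (abs_nonneg _) ((abs_nonneg _).trans ih)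

lemma poch_two (n : ℕ) : poch 2 n = (Nat.factorial (n+1) : ℝ) := by
  induction n with
  | zero => simp [poch_zero]
  | succ k ih =>
      rw [poch_succ, ih, show k+1+1 = (k+1)+1 from rfl, Nat.factorial_succ (k+1)]
      push_cast; ring

lemma factorial_le_four_pow_mul_poch {z : ℝ} (hz : 1/4 ≤ z) (j : ℕ) :
    (Nat.factorial j : ℝ) ≤ 4 ^ j * poch z j := by
  have hz0 : 0 < z := lt_of_lt_of_le (by norm_num) hz
  induction j with
  | zero => simp [poch_zero]
  | succ k ih =>
      rw [poch_succ, Nat.factorial_succ]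
      have hp := poch_pos hz0 k
      have : ((k:ℝ)+1) ≤ 4 * (z + k) := by linarith [Nat.cast_nonneg (α := ℝ) k]
      push_cast
      calc ((k:ℝ)+1) * (Nat.factorial k) ≤ (4*(z+k)) * (4^k * poch z k) := by
            apply mul_le_mul this ih (by positivity) (by positivity)
      _ = 4^(k+1) * (poch z k * (z + k)) := by ring

lemma key_quot {x y W z : ℝ} (hx : |x| ≤ W) (hy : |y| ≤ W) (hz : 1/4 ≤ z) (j : ℕ) :
    |poch x j * poch y j / (poch z j * (Nat.factorial j : ℝ))|
      ≤ exp (2*W) * (4 * exp 2) ^ j := by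
  have hW : 0 ≤ W := le_trans (abs_nonneg x) hx
  have hz0 : (0:ℝ) < z := lt_of_lt_of_le (by norm_num) hz
  have hpz := poch_pos hz0 j
  have hfj : (0:ℝ) < (Nat.factorial j : ℝ) := by positivity
  have hden : (0:ℝ) < poch z j * (Nat.factorial j : ℝ) := by positivity
  have hWj : (0:ℝ) ≤ W + j := by positivity
  have hP : ((W + j)^j : ℝ) ≤ (Nat.factorial j : ℝ) * exp (W + j) := by
    have := Real.pow_div_factorial_le_exp _ hWj j
    calc ((W+j)^j : ℝ) = ((W+j)^j / (Nat.factorial j : ℝ)) * (Nat.factorial j : ℝ) := by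
          field_simp
    _ ≤ exp (W+j) * (Nat.factorial j : ℝ) := by
          apply mul_le_mul_of_nonneg_right this hfj.le
    _ = _ := by ring
  have hnum : |poch x j * poch y j| ≤ ((W+j)^j) * ((W+j)^j) := by
    rw [abs_mul]
    exact mul_le_mul (abs_poch_le hx j) (abs_poch_le hy j) (abs_nonneg _) (by positivity)
  have hfac : (Nat.factorial j : ℝ) * (Nat.factorial j : ℝ)
      ≤ 4^j * (poch z j * (Nat.factorial j : ℝ)) := by
    have h4 := factorial_le_four_pow_mul_poch hz j
    calc (Nat.factorial j : ℝ) * (Nat.factorial j : ℝ)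
        ≤ (4^j * poch z j) * (Nat.factorial j : ℝ) := by
          apply mul_le_mul_of_nonneg_right h4 hfj.le
    _ = _ := by ring
  have hexp : exp (W+j) * exp (W+j) = exp (2*W) * (exp 2)^j := by
    rw [← Real.exp_add, ← Real.exp_nat_mul, ← Real.exp_add]
    congr 1; ring
  rw [abs_div, abs_of_pos hden, div_le_iff₀ hden]
  calc |poch x j * poch y j| ≤ ((W+j)^j) * ((W+j)^j) := hnum
  _ ≤ ((Nat.factorial j : ℝ) * exp (W + j)) * ((Nat.factorial j : ℝ) * exp (W + j)) := by
      apply mul_le_mul hP hP (by positivity) (by positivity)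
  _ = ((Nat.factorial j : ℝ) * (Nat.factorial j : ℝ)) * (exp (W+j) * exp (W+j)) := by ring
  _ ≤ (4^j * (poch z j * (Nat.factorial j : ℝ))) * (exp (W+j) * exp (W+j)) := by
      apply mul_le_mul_of_nonneg_right hfac (by positivity)
  _ = exp (2*W) * (4 * exp 2)^j * (poch z j * (Nat.factorial j : ℝ)) := by
      rw [hexp, mul_pow]; ring

-- generic geometric bounds
lemma summable_geom_bound {c : ℕ → ℝ} {K : ℝ} (hc : ∀ j, |c j| ≤ K * (1/3:ℝ)^j) :
    Summable c := by
  apply Summable.of_norm_bounded (g := fun j => K * (1/3:ℝ)^j) _ hc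
  exact (summable_geometric_of_lt_one (by norm_num) (by norm_num)).mul_left K

lemma abs_tsum_geom_bound {c : ℕ → ℝ} {K : ℝ} (hc : ∀ j, |c j| ≤ K * (1/3:ℝ)^j) :
    |∑' j, c j| ≤ 2 * K := by
  have hs := summable_geom_bound hc
  have hg : Summable (fun j => K * (1/3:ℝ)^j) :=
    (summable_geometric_of_lt_one (by norm_num) (by norm_num)).mul_left K
  have habs : Summable (fun j => |c j|) :=
    Summable.of_nonneg_of_le (fun j => abs_nonneg _) hc hg
  calc |∑' j, c j| ≤ ∑' j, |c j| := by
        have := norm_tsum_le_tsum_norm (f := c) (by simpa [Real.norm_eq_abs] using habs)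
        simpa [Real.norm_eq_abs] using this
  _ ≤ ∑' j, K * (1/3:ℝ)^j := Summable.tsum_le_tsum hc habs hg
  _ = K * (1-1/3)⁻¹ := by
        rw [tsum_mul_left, tsum_geometric_of_lt_one (by norm_num) (by norm_num)]
  _ ≤ 2 * K := by
        have hK : 0 ≤ K := le_trans (abs_nonneg (c 0)) (by simpa using hc 0)
        nlinarith

lemma four_exp_two_le : 4 * exp 2 ≤ 100/3 := by
  have h := Real.exp_one_lt_d9
  have h2 : exp 2 = exp 1 * exp 1 := by rw [← Real.exp_add]; norm_num
  nlinarith [Real.exp_pos 1]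

lemma exp_two_pos : 0 < exp 2 := Real.exp_pos 2

lemma geom_dom {c : ℕ → ℝ} {K : ℝ} (hc : ∀ j, |c j| ≤ K * (4*exp 2)^j) {X : ℝ}
    (hX : 100 ≤ X) (j : ℕ) : |c j * (-1/X)^j| ≤ K * (1/3:ℝ)^j := by
  have hX0 : (0:ℝ) < X := lt_of_lt_of_le (by norm_num) hX
  have hK : 0 ≤ K := le_trans (abs_nonneg (c 0)) (by simpa using hc 0)
  have h1 : |(-1/X)^j| = (1/X)^j := by
    rw [abs_pow]; congr 1
    rw [abs_div, abs_neg, abs_one, abs_of_pos hX0]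
  rw [abs_mul, h1]
  calc |c j| * (1/X)^j ≤ (K * (4*exp 2)^j) * (1/X)^j := by
        apply mul_le_mul_of_nonneg_right (hc j) (by positivity)
  _ = K * ((4*exp 2)/X)^j := by rw [div_pow, mul_pow, div_pow, one_pow]; ring
  _ ≤ K * (1/3:ℝ)^j := by
        apply mul_le_mul_of_nonneg_left _ hK
        apply pow_le_pow_left₀ (by positivity)
        rw [div_le_div_iff₀ hX0 (by norm_num)]
        nlinarith [four_exp_two_le]

lemma summable_series {c : ℕ → ℝ} {K : ℝ} (hc : ∀ j, |c j| ≤ K * (4*exp 2)^j) {X : ℝ}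
    (hX : 100 ≤ X) : Summable (fun j => c j * (-1/X)^j) :=
  summable_geom_bound (geom_dom hc hX)

lemma abs_series_le {c : ℕ → ℝ} {K : ℝ} (hc : ∀ j, |c j| ≤ K * (4*exp 2)^j) {X : ℝ}
    (hX : 100 ≤ X) : |∑' j, c j * (-1/X)^j| ≤ 2 * K :=
  abs_tsum_geom_bound (geom_dom hc hX)

lemma series_tail {c : ℕ → ℝ} {K : ℝ} (hc : ∀ j, |c j| ≤ K * (4*exp 2)^j) (hc0 : c 0 = 1)
    {X : ℝ} (hX : 100 ≤ X) : |(∑' j, c j * (-1/X)^j) - 1| ≤ 70 * K / X := by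
  have hX0 : (0:ℝ) < X := lt_of_lt_of_le (by norm_num) hX
  have hK : 0 ≤ K := le_trans (abs_nonneg (c 0)) (by simpa using hc 0)
  have hsum := summable_series hc hX
  rw [Summable.tsum_eq_zero_add hsum, hc0]
  simp only [pow_zero, mul_one, add_sub_cancel_left]
  have hrat : (4*exp 2)/X ≤ 1/3 := by
    rw [div_le_div_iff₀ hX0 (by norm_num)]
    nlinarith [four_exp_two_le]
  have hc' : ∀ j, |c (j+1) * (-1/X)^(j+1)| ≤ (K * (4*exp 2) / X) * (1/3:ℝ)^j := by
    intro j
    have h1 : |(-1/X)^(j+1)| = (1/X)^(j+1) := by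
      rw [abs_pow]; congr 1; rw [abs_div, abs_neg, abs_one, abs_of_pos hX0]
    rw [abs_mul, h1]
    calc |c (j+1)| * (1/X)^(j+1) ≤ (K * (4*exp 2)^(j+1)) * (1/X)^(j+1) := by
          apply mul_le_mul_of_nonneg_right (hc (j+1)) (by positivity)
    _ = (K * (4*exp 2)/X) * ((4*exp 2)/X)^j := by
          rw [mul_pow, div_pow, one_pow, pow_succ, pow_succ]; field_simp
          have hXX : X^j * X⁻¹^j = 1 := by rw [← mul_pow, mul_inv_cancel₀ hX0.ne', one_pow]
          linear_combination (-(K * exp 2 ^ j * X * 4 ^ j)) * hXX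
    _ ≤ (K * (4*exp 2) / X) * (1/3:ℝ)^j := by
          apply mul_le_mul_of_nonneg_left (pow_le_pow_left₀ (by positivity) hrat j)
          positivity
  calc |∑' j, c (j+1) * (-1/X)^(j+1)| ≤ 2 * (K * (4*exp 2) / X) := abs_tsum_geom_bound hc'
  _ ≤ 70 * K / X := by
      have he : 2 * (K * (4*exp 2) / X) = (2 * K * (4*exp 2))/X := by ring
      rw [he, div_le_div_iff₀ hX0 hX0]
      nlinarith [four_exp_two_le, hK, hX0, mul_nonneg hK hX0.le]

lemma tendsto_series {c : ℕ → ℝ} {K : ℝ} (hc : ∀ j, |c j| ≤ K * (4*exp 2)^j) :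
    Tendsto (fun X : ℝ => ∑' j, c j * (-1/X)^j) atTop (𝓝 (c 0)) := by
  have hK : 0 ≤ K := le_trans (abs_nonneg (c 0)) (by simpa using hc 0)
  have hbd : Summable (fun j => K * (1/3:ℝ)^j) :=
    (summable_geometric_of_lt_one (by norm_num) (by norm_num)).mul_left K
  have := tendsto_tsum_of_dominated_convergence (𝓕 := atTop)
    (f := fun (X : ℝ) (j : ℕ) => c j * (-1/X)^j)
    (g := fun j => if j = 0 then c 0 else 0) (bound := fun j => K * (1/3:ℝ)^j)
    hbd ?_ ?_
  · have heq : ∑' j, (if j = 0 then c 0 else 0) = c 0 := tsum_ite_eq 0 (fun _ => c 0)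
    rwa [heq] at this
  · intro j
    cases j with
    | zero => simpa using tendsto_const_nhds
    | succ k =>
        simp only [Nat.succ_ne_zero, if_false]
        have h1 : Tendsto (fun X : ℝ => -1/X) atTop (𝓝 (0:ℝ)) := by
          have := (tendsto_inv_atTop_zero (𝕜 := ℝ)).neg
          simp only [neg_zero] at this
          exact this.congr (fun X => by ring)
        have h2 : Tendsto (fun X : ℝ => (-1/X)^(k+1)) atTop (𝓝 0) := by
          have := h1.pow (k+1)
          simpa using this
        simpa using h2.const_mul (c k.succ)
  · filter_upwards [eventually_ge_atTop (100:ℝ)] with X hX j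
    show ‖c j * (-1/X)^j‖ ≤ K * (1/3:ℝ)^j
    rw [Real.norm_eq_abs]; exact geom_dom hc hX j

noncomputable def m0 (a : ℝ) : ℝ := min |Real.sin (π*(a/2))| |Real.cos (π*(a/2))|

lemma sc_ge (x : ℝ) (n : ℕ) :
    min |Real.sin x| |Real.cos x| ≤ |Real.sin (x + n*(π/2))| ∧
    min |Real.sin x| |Real.cos x| ≤ |Real.cos (x + n*(π/2))| := by
  induction n with
  | zero => simp
  | succ k ih =>
      have harg : x + (k+1:ℕ)*(π/2) = (x + k*(π/2)) + π/2 := by push_cast; ring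
      rw [harg, Real.sin_add_pi_div_two, Real.cos_add_pi_div_two, abs_neg]
      exact ⟨ih.2, ih.1⟩

lemma m0_le_sin (a : ℝ) (n : ℕ) : m0 a ≤ |Real.sin (π * ((a + n)/2))| := by
  rw [show π * ((a + (n:ℝ))/2) = π*(a/2) + (n:ℝ)*(π/2) by ring]
  exact (sc_ge (π*(a/2)) n).1

lemma m0_le_cos (a : ℝ) (n : ℕ) : m0 a ≤ |Real.cos (π * ((a + n)/2))| := by
  rw [show π * ((a + (n:ℝ))/2) = π*(a/2) + (n:ℝ)*(π/2) by ring]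
  exact (sc_ge (π*(a/2)) n).2

lemma m0_pos {a : ℝ} (ha0 : 0 < a) (ha2 : a < 2) (ha1 : a ≠ 1) : 0 < m0 a := by
  have hpi := Real.pi_pos
  have hs : Real.sin (π*(a/2)) > 0 := by
    apply Real.sin_pos_of_pos_of_lt_pi <;> nlinarith
  have hc : Real.cos (π*(a/2)) ≠ 0 := by
    rcases lt_or_gt_of_ne ha1 with h | h
    · have : Real.cos (π*(a/2)) > 0 := by
        apply Real.cos_pos_of_mem_Ioo
        constructor <;> [nlinarith; nlinarith]
      exact ne_of_gt this
    · have : Real.cos (π*(a/2)) < 0 := by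
        apply Real.cos_neg_of_pi_div_two_lt_of_lt <;> nlinarith
      exact ne_of_lt this
  exact lt_min (abs_pos.mpr (ne_of_gt hs)) (abs_pos.mpr hc)

lemma Gamma_mono {x y : ℝ} (hx : 2 ≤ x) (hxy : x ≤ y) : Real.Gamma x ≤ Real.Gamma y :=
  Real.Gamma_strictMonoOn_Ici.monotoneOn (Set.mem_Ici.mpr hx)
    (Set.mem_Ici.mpr (hx.trans hxy)) hxy

lemma fact_shift (k d : ℕ) : Nat.factorial (k + d) ≤ (k + d)^d * Nat.factorial k := by
  induction d with
  | zero => simp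
  | succ e ih =>
      rw [show k + (e+1) = (k+e) + 1 from rfl, Nat.factorial_succ]
      calc (k+e+1) * Nat.factorial (k+e) ≤ (k+e+1) * ((k+e)^e * Nat.factorial k) :=
            Nat.mul_le_mul_left _ ih
      _ ≤ (k+e+1) * ((k+e+1)^e * Nat.factorial k) := by
            apply Nat.mul_le_mul_left
            exact Nat.mul_le_mul_right _ (Nat.pow_le_pow_left (Nat.le_succ _) e)
      _ = (k+(e+1))^(e+1) * Nat.factorial k := by ring

lemma central_binom_le (k : ℕ) : Nat.factorial (2*k) ≤ 4^k * (Nat.factorial k * Nat.factorial k) := by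
  have hch : Nat.choose (2*k) k * Nat.factorial k * Nat.factorial k = Nat.factorial (2*k) := by
    have := Nat.choose_mul_factorial_mul_factorial (show k ≤ 2*k by omega)
    rwa [show 2*k - k = k by omega] at this
  have hle : Nat.choose (2*k) k ≤ 4^k := by
    have h1 : Nat.choose (2*k) k ≤ ∑ i ∈ Finset.range (2*k+1), Nat.choose (2*k) i :=
      Finset.single_le_sum (fun i _ => Nat.zero_le _) (Finset.mem_range.mpr (by omega))
    have h2 : ∑ i ∈ Finset.range (2*k+1), Nat.choose (2*k) i = 2^(2*k) := Nat.sum_range_choose (2*k)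
    have h3 : (2:ℕ)^(2*k) = 4^k := by rw [pow_mul]; norm_num
    omega
  calc Nat.factorial (2*k) = Nat.choose (2*k) k * Nat.factorial k * Nat.factorial k := hch.symm
  _ ≤ 4^k * Nat.factorial k * Nat.factorial k := by
      exact Nat.mul_le_mul_right _ (Nat.mul_le_mul_right _ hle)
  _ = 4^k * (Nat.factorial k * Nat.factorial k) := by ring

lemma nkey {n : ℕ} (hn : 6 ≤ n) :
    Nat.factorial (n+1) * Nat.factorial (n+2) ≤
      (n+2)^10 * 2^n * (Nat.factorial (n-1) * (Nat.factorial (n/2-1) * Nat.factorial (n/2-2))) := by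
  set m := n/2 with hm
  have hm3 : 3 ≤ m := by omega
  have h1 : Nat.factorial (n+1) ≤ (n+1)^2 * Nat.factorial (n-1) := by
    have := fact_shift (n-1) 2
    rwa [show n-1+2 = n+1 by omega] at this
  have h2 : Nat.factorial (n+2) ≤ (n+2)^7 * Nat.factorial (n-5) := by
    have := fact_shift (n-5) 7
    rwa [show n-5+7 = n+2 by omega] at this
  have h3 : Nat.factorial (n-5) ≤ Nat.factorial (2*(m-2)) := Nat.factorial_le (by omega)
  have h4 := central_binom_le (m-2)
  have h5 : (4:ℕ)^(m-2) ≤ 2^n := by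
    calc (4:ℕ)^(m-2) = 2^(2*(m-2)) := by rw [pow_mul]; norm_num
    _ ≤ 2^n := Nat.pow_le_pow_right (by omega) (by omega)
  have h6 : Nat.factorial (m-2) ≤ Nat.factorial (m-1) := Nat.factorial_le (by omega)
  have h35 : Nat.factorial (n-5) ≤ 2^n * (Nat.factorial (m-2) * Nat.factorial (m-2)) :=
    h3.trans (h4.trans (Nat.mul_le_mul_right _ h5))
  calc Nat.factorial (n+1) * Nat.factorial (n+2)
      ≤ ((n+1)^2 * Nat.factorial (n-1)) * ((n+2)^7 * Nat.factorial (n-5)) :=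
        Nat.mul_le_mul h1 h2
  _ ≤ ((n+2)^2 * Nat.factorial (n-1)) * ((n+2)^7 * (2^n * (Nat.factorial (m-2) * Nat.factorial (m-2)))) := by
        exact Nat.mul_le_mul (Nat.mul_le_mul (Nat.pow_le_pow_left (by omega) 2) le_rfl)
          (Nat.mul_le_mul le_rfl h35)
  _ = (n+2)^9 * 2^n * (Nat.factorial (n-1) * (Nat.factorial (m-2) * Nat.factorial (m-2))) := by ring
  _ ≤ (n+2)^10 * 2^n * (Nat.factorial (n-1) * (Nat.factorial (m-1) * Nat.factorial (m-2))) := by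
        have hp910 : (n+2)^9 ≤ (n+2)^10 := Nat.pow_le_pow_right (by omega) (by omega)
        exact Nat.mul_le_mul (Nat.mul_le_mul hp910 le_rfl)
          (Nat.mul_le_mul le_rfl (Nat.mul_le_mul h6 le_rfl))

lemma Gamma_nat_cast (k : ℕ) : Real.Gamma ((k:ℝ)+1) = Nat.factorial k :=
  Real.Gamma_nat_eq_factorial k

lemma gamma_ratio_le {a b : ℝ} (ha0 : 0 < a) (ha2 : a < 2) (hb0 : -(1/2:ℝ) < b)
    (hb2 : b ≤ 3/2) {n : ℕ} (hn : 6 ≤ n) {p q : ℝ}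
    (hp : ((n/2 : ℕ):ℝ) ≤ p) (hq : ((n/2:ℕ):ℝ) - 1 ≤ q) :
    Real.Gamma ((n:ℝ)+3/2) * Real.Gamma ((n:ℝ)+b+1) /
      (Real.Gamma ((n:ℝ)+a) * Real.Gamma p * Real.Gamma q) ≤ ((n:ℝ)+2)^10 * 2^n := by
  set m := n/2 with hm
  have hm3 : 3 ≤ m := by omega
  have hmr : (3:ℝ) ≤ (m:ℝ) := by exact_mod_cast hm3
  have hnr : (6:ℝ) ≤ (n:ℝ) := by exact_mod_cast hn
  -- numerator bounds
  have hnum1 : Real.Gamma ((n:ℝ)+3/2) ≤ (Nat.factorial (n+1) : ℝ) := by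
    have h := Gamma_mono (by linarith : (2:ℝ) ≤ (n:ℝ)+3/2) (by linarith : (n:ℝ)+3/2 ≤ (n:ℝ)+2)
    rwa [show ((n:ℝ)+2) = ((n+1:ℕ):ℝ)+1 by push_cast; ring, Gamma_nat_cast] at h
  have hnum2 : Real.Gamma ((n:ℝ)+b+1) ≤ (Nat.factorial (n+2) : ℝ) := by
    have h := Gamma_mono (by linarith : (2:ℝ) ≤ (n:ℝ)+b+1) (by linarith : (n:ℝ)+b+1 ≤ (n:ℝ)+3)
    rwa [show ((n:ℝ)+3) = ((n+2:ℕ):ℝ)+1 by push_cast; ring, Gamma_nat_cast] at h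
  -- denominator bounds
  have hden1 : (Nat.factorial (n-1) : ℝ) ≤ Real.Gamma ((n:ℝ)+a) := by
    have h := Gamma_mono (by linarith : (2:ℝ) ≤ (n:ℝ)) (by linarith : (n:ℝ) ≤ (n:ℝ)+a)
    have he : ((n:ℝ)) = ((n-1:ℕ):ℝ)+1 := by
      have h' : ((n-1:ℕ):ℝ) = (n:ℝ)-1 := by push_cast [Nat.cast_sub (by omega : 1 ≤ n)]; ring
      rw [h']; ring
    have he2 : Real.Gamma ((n:ℝ)) = (Nat.factorial (n-1) : ℝ) := by rw [he, Gamma_nat_cast]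
    linarith
  have hden2 : (Nat.factorial (m-1) : ℝ) ≤ Real.Gamma p := by
    have h := Gamma_mono (by linarith : (2:ℝ) ≤ ((m:ℕ):ℝ)) hp
    have he : ((m:ℕ):ℝ) = ((m-1:ℕ):ℝ)+1 := by
      push_cast [Nat.cast_sub (by omega : 1 ≤ m)]; ring
    have he2 : Real.Gamma ((m:ℕ):ℝ) = (Nat.factorial (m-1) : ℝ) := by rw [he, Gamma_nat_cast]
    linarith
  have hden3 : (Nat.factorial (m-2) : ℝ) ≤ Real.Gamma q := by
    have h := Gamma_mono (by linarith : (2:ℝ) ≤ ((m:ℕ):ℝ)-1) hq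
    have he : ((m:ℕ):ℝ)-1 = ((m-2:ℕ):ℝ)+1 := by
      push_cast [Nat.cast_sub (by omega : 2 ≤ m)]; ring
    have he2 : Real.Gamma (((m:ℕ):ℝ)-1) = (Nat.factorial (m-2) : ℝ) := by rw [he, Gamma_nat_cast]
    linarith
  have hf1 : (0:ℝ) < (Nat.factorial (n-1) : ℝ) := by positivity
  have hf2 : (0:ℝ) < (Nat.factorial (m-1) : ℝ) := by positivity
  have hf3 : (0:ℝ) < (Nat.factorial (m-2) : ℝ) := by positivity
  have hgp : (0:ℝ) < Real.Gamma p := lt_of_lt_of_le hf2 hden2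
  have hgq : (0:ℝ) < Real.Gamma q := lt_of_lt_of_le hf3 hden3
  have hga : (0:ℝ) < Real.Gamma ((n:ℝ)+a) := lt_of_lt_of_le hf1 hden1
  have hnum : Real.Gamma ((n:ℝ)+3/2) * Real.Gamma ((n:ℝ)+b+1)
      ≤ (Nat.factorial (n+1) : ℝ) * (Nat.factorial (n+2) : ℝ) := by
    apply mul_le_mul hnum1 hnum2 (Real.Gamma_nonneg_of_nonneg (by linarith)) (by positivity)
  have hden : (Nat.factorial (n-1) : ℝ) * (Nat.factorial (m-1):ℝ) * (Nat.factorial (m-2):ℝ)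
      ≤ Real.Gamma ((n:ℝ)+a) * Real.Gamma p * Real.Gamma q := by
    apply mul_le_mul (mul_le_mul hden1 hden2 hf2.le hga.le) hden3 hf3.le (by positivity)
  calc Real.Gamma ((n:ℝ)+3/2) * Real.Gamma ((n:ℝ)+b+1) /
      (Real.Gamma ((n:ℝ)+a) * Real.Gamma p * Real.Gamma q)
      ≤ (Nat.factorial (n+1) : ℝ) * (Nat.factorial (n+2) : ℝ) /
        ((Nat.factorial (n-1) : ℝ) * (Nat.factorial (m-1):ℝ) * (Nat.factorial (m-2):ℝ)) := by
        apply div_le_div₀ (by positivity) hnum (by positivity) hden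
  _ ≤ ((n:ℝ)+2)^10 * 2^n := by
      rw [div_le_iff₀ (by positivity)]
      have := nkey hn
      have hc : ((Nat.factorial (n+1) * Nat.factorial (n+2) : ℕ) : ℝ) ≤
          (((n+2)^10 * 2^n * (Nat.factorial (n-1) * (Nat.factorial (n/2-1) * Nat.factorial (n/2-2))) : ℕ) : ℝ) := by
        exact_mod_cast this
      push_cast at hc
      rw [← hm] at hc
      nlinarith [hc]

noncomputable def Cab (a b : ℝ) : ℝ := |a| + 2*|b| + 1
noncomputable def c2c (a b : ℝ) (n j : ℕ) : ℝ :=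
  poch ((a - 1 - n) / 2) j * poch ((a - 2 * b - n) / 2) j /
      (poch (1 / 2) j * (Nat.factorial j : ℝ))
noncomputable def c3c (a b : ℝ) (n j : ℕ) : ℝ :=
  poch ((a - n) / 2) j * poch ((a - 2 * b + 1 - n) / 2) j /
      (poch (3 / 2) j * (Nat.factorial j : ℝ))
noncomputable def S2 (a b : ℝ) (n : ℕ) (X : ℝ) : ℝ := ∑' j : ℕ, c2c a b n j * (-1 / X) ^ j
noncomputable def S3 (a b : ℝ) (n : ℕ) (X : ℝ) : ℝ := ∑' j : ℕ, c3c a b n j * (-1 / X) ^ j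

lemma f2_eq (a b : ℝ) (n : ℕ) (X : ℝ) : f2 a b n X = X ^ (-((a + n) / 2)) * S2 a b n X := rfl
lemma f3_eq (a b : ℝ) (n : ℕ) (X : ℝ) : f3 a b n X = X ^ (-((a + n + 1) / 2)) * S3 a b n X := rfl

lemma c2c_zero (a b : ℝ) (n : ℕ) : c2c a b n 0 = 1 := by simp [c2c, poch_zero]
lemma c3c_zero (a b : ℝ) (n : ℕ) : c3c a b n 0 = 1 := by simp [c3c, poch_zero]

lemma c2c_bound (a b : ℝ) (n : ℕ) (j : ℕ) :
    |c2c a b n j| ≤ exp ((n:ℝ) + Cab a b) * (4 * exp 2) ^ j := by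
  have ha1 := le_abs_self a; have ha2 := neg_abs_le a
  have hb1 := le_abs_self b; have hb2 := neg_abs_le b
  have hn : (0:ℝ) ≤ (n:ℝ) := Nat.cast_nonneg n
  have hW : ∀ u : ℝ, |u| ≤ (n:ℝ) + Cab a b → |u/2| ≤ ((n:ℝ) + Cab a b)/2 := by
    intro u hu
    rw [abs_div, abs_two]; linarith
  have h1 : |(a - 1 - n)/2| ≤ ((n:ℝ) + Cab a b)/2 := by
    apply hW; rw [Cab, abs_le]; constructor <;> [nlinarith [abs_nonneg b]; nlinarith [abs_nonneg b]]
  have h2 : |(a - 2*b - n)/2| ≤ ((n:ℝ) + Cab a b)/2 := by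
    apply hW; rw [Cab, abs_le]; constructor <;> [nlinarith; nlinarith]
  have h := key_quot h1 h2 (by norm_num : (1/4:ℝ) ≤ 1/2) j
  rwa [show 2*(((n:ℝ) + Cab a b)/2) = (n:ℝ) + Cab a b by ring] at h

lemma c3c_bound (a b : ℝ) (n : ℕ) (j : ℕ) :
    |c3c a b n j| ≤ exp ((n:ℝ) + Cab a b) * (4 * exp 2) ^ j := by
  have ha1 := le_abs_self a; have ha2 := neg_abs_le a
  have hb1 := le_abs_self b; have hb2 := neg_abs_le b
  have hn : (0:ℝ) ≤ (n:ℝ) := Nat.cast_nonneg n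
  have hW : ∀ u : ℝ, |u| ≤ (n:ℝ) + Cab a b → |u/2| ≤ ((n:ℝ) + Cab a b)/2 := by
    intro u hu
    rw [abs_div, abs_two]; linarith
  have h1 : |(a - n)/2| ≤ ((n:ℝ) + Cab a b)/2 := by
    apply hW; rw [Cab, abs_le]; constructor <;> [nlinarith [abs_nonneg b]; nlinarith [abs_nonneg b]]
  have h2 : |(a - 2*b + 1 - n)/2| ≤ ((n:ℝ) + Cab a b)/2 := by
    apply hW; rw [Cab, abs_le]; constructor <;> [nlinarith; nlinarith]
  have h := key_quot h1 h2 (by norm_num : (1/4:ℝ) ≤ 3/2) j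
  rwa [show 2*(((n:ℝ) + Cab a b)/2) = (n:ℝ) + Cab a b by ring] at h

-- rpow lemmas
lemma rpow_decay {X : ℝ} (hX : (10:ℝ)^6 ≤ X) (n : ℕ) :
    X ^ (-((n:ℝ)/2)) ≤ (1/1000:ℝ)^n := by
  have hX0 : (0:ℝ) < X := lt_of_lt_of_le (by norm_num) hX
  have hsq : (1000:ℝ) ≤ X ^ ((1:ℝ)/2) := by
    have h1 : ((10:ℝ)^6) ^ ((1:ℝ)/2) ≤ X ^ ((1:ℝ)/2) :=
      Real.rpow_le_rpow (by positivity) hX (by norm_num)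
    have h2 : ((10:ℝ)^6) ^ ((1:ℝ)/2) = 1000 := by
      rw [show ((10:ℝ)^6) = (1000:ℝ)^(2:ℕ) by norm_num, ← Real.rpow_natCast (1000:ℝ) 2,
        ← Real.rpow_mul (by norm_num)]
      norm_num
    linarith
  have hhalf : X ^ (-((1:ℝ)/2)) ≤ 1/1000 := by
    rw [Real.rpow_neg hX0.le]
    rw [show (1:ℝ)/1000 = (1000:ℝ)⁻¹ by norm_num]
    apply inv_anti₀ (by norm_num) hsq
  calc X ^ (-((n:ℝ)/2)) = (X ^ (-((1:ℝ)/2)))^n := by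
        rw [← Real.rpow_natCast (X ^ (-((1:ℝ)/2))) n, ← Real.rpow_mul hX0.le]
        congr 1; ring
  _ ≤ (1/1000:ℝ)^n := pow_le_pow_left₀ (by positivity) hhalf n

section
variable {a b : ℝ} (ha0 : 0 < a) (ha2 : a < 2) (hb0 : -(1/2:ℝ) < b)

include ha0 ha2 hb0 in
lemma abs_coeffB_le (n : ℕ) : |coeffB a b n| ≤ (n:ℝ) + 1 := by
  have hp3 := poch_pos (show (0:ℝ) < 3/2 by norm_num) n
  have hpb1 := poch_pos (show (0:ℝ) < b+1 by linarith) n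
  have hfn : (0:ℝ) < (Nat.factorial n : ℝ) := by positivity
  have h1 : |poch (1/2) n| ≤ poch (3/2) n := by
    apply abs_poch_le_poch; intro i
    rw [abs_of_nonneg (by positivity)]; linarith
  have h2 : |poch a n| ≤ poch 2 n := by
    apply abs_poch_le_poch; intro i
    rw [abs_of_nonneg (by positivity)]; linarith
  have h3 : |poch b n| ≤ poch (b+1) n := by
    apply abs_poch_le_poch; intro i
    have hi : (0:ℝ) ≤ (i:ℝ) := Nat.cast_nonneg i
    rw [abs_le]; constructor <;> [linarith; linarith]
  have hnum : |poch (1/2) n * poch a n * poch b n| ≤ poch (3/2) n * poch (b+1) n * ((n:ℝ)+1) * (Nat.factorial n : ℝ) := by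
    rw [abs_mul, abs_mul]
    calc |poch (1/2) n| * |poch a n| * |poch b n|
        ≤ poch (3/2) n * poch 2 n * poch (b+1) n := by
          apply mul_le_mul (mul_le_mul h1 h2 (abs_nonneg _) hp3.le) h3 (abs_nonneg _)
          exact (mul_pos hp3 (poch_pos (by norm_num : (0:ℝ) < 2) n)).le
    _ = poch (3/2) n * poch (b+1) n * ((Nat.factorial (n+1) : ℝ)) := by rw [poch_two]; ring
    _ = poch (3/2) n * poch (b+1) n * ((n:ℝ)+1) * (Nat.factorial n : ℝ) := by
          rw [Nat.factorial_succ]; push_cast; ring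
  have hden : (0:ℝ) < poch (3/2) n * poch (b+1) n * (Nat.factorial n : ℝ) :=
    mul_pos (mul_pos hp3 hpb1) hfn
  rw [coeffB, abs_div, abs_of_pos hden, div_le_iff₀ hden]
  calc |poch (1/2) n * poch a n * poch b n|
      ≤ poch (3/2) n * poch (b+1) n * ((n:ℝ)+1) * (Nat.factorial n : ℝ) := hnum
  _ = ((n:ℝ)+1) * (poch (3/2) n * poch (b+1) n * (Nat.factorial n : ℝ)) := by ring

end

-- R2/R3 and factorization of G2/G3
noncomputable def R2 (a b : ℝ) (n : ℕ) : ℝ :=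
  Real.Gamma (n + 3 / 2) * Real.Gamma (n + b + 1) /
      (Real.Gamma (n + a) * Real.Gamma (3 / 2 + (n - a) / 2) *
        Real.Gamma (b + 1 + (n - a) / 2))
noncomputable def R3 (a b : ℝ) (n : ℕ) : ℝ :=
  Real.Gamma (n + 3 / 2) * Real.Gamma (n + b + 1) /
      (Real.Gamma (n + a) * Real.Gamma (1 + (n - a) / 2) *
        Real.Gamma (b + 1 / 2 + (n - a) / 2))

lemma G2_eq (a b : ℝ) (n : ℕ) :
    G2 a b n = (2 : ℝ) ^ (a + n - 1) * Real.pi / Real.sin (Real.pi * ((a + n) / 2)) * R2 a b n := rfl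
lemma G3_eq (a b : ℝ) (n : ℕ) :
    G3 a b n = -((2 : ℝ) ^ (a + n) * Real.pi / Real.cos (Real.pi * ((a + n) / 2))) * R3 a b n := rfl

section
variable {a b : ℝ} (ha0 : 0 < a) (ha2 : a < 2) (ha1 : a ≠ 1) (hb1 : (a-1)/2 < b)

include ha0 ha2 hb1 in
lemma R2_pos (n : ℕ) : 0 < R2 a b n := by
  have hn : (0:ℝ) ≤ (n:ℝ) := Nat.cast_nonneg n
  have g1 := Real.Gamma_pos_of_pos (show (0:ℝ) < (n:ℝ) + 3/2 by linarith)
  have g2 := Real.Gamma_pos_of_pos (show (0:ℝ) < (n:ℝ) + b + 1 by linarith)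
  have g3 := Real.Gamma_pos_of_pos (show (0:ℝ) < (n:ℝ) + a by linarith)
  have g4 := Real.Gamma_pos_of_pos (show (0:ℝ) < 3/2 + ((n:ℝ) - a)/2 by linarith)
  have g5 := Real.Gamma_pos_of_pos (show (0:ℝ) < b + 1 + ((n:ℝ) - a)/2 by linarith)
  rw [R2]; positivity

include ha0 ha2 hb1 in
lemma R3_pos (n : ℕ) : 0 < R3 a b n := by
  have hn : (0:ℝ) ≤ (n:ℝ) := Nat.cast_nonneg n
  have g1 := Real.Gamma_pos_of_pos (show (0:ℝ) < (n:ℝ) + 3/2 by linarith)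
  have g2 := Real.Gamma_pos_of_pos (show (0:ℝ) < (n:ℝ) + b + 1 by linarith)
  have g3 := Real.Gamma_pos_of_pos (show (0:ℝ) < (n:ℝ) + a by linarith)
  have g4 := Real.Gamma_pos_of_pos (show (0:ℝ) < 1 + ((n:ℝ) - a)/2 by linarith)
  have g5 := Real.Gamma_pos_of_pos (show (0:ℝ) < b + 1/2 + ((n:ℝ) - a)/2 by linarith)
  rw [R3]; positivity

include ha0 ha2 ha1 hb1 in
lemma abs_G2_le (n : ℕ) : |G2 a b n| ≤ 2^(n+2) * π / m0 a * R2 a b n := by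
  have hm := m0_pos ha0 ha2 ha1
  have hR := R2_pos ha0 ha2 hb1 n
  have hsin := m0_le_sin a n
  have hsin0 : (0:ℝ) < |Real.sin (π * ((a + n)/2))| := lt_of_lt_of_le hm hsin
  have hpow : ((2:ℝ) ^ (a + n - 1)) ≤ 2^(n+2) := by
    calc ((2:ℝ) ^ (a + (n:ℝ) - 1)) ≤ (2:ℝ) ^ (((n:ℝ)+2)) := by
          apply Real.rpow_le_rpow_of_exponent_le (by norm_num)
          linarith
    _ = ((2:ℝ))^((n+2:ℕ):ℝ) := by push_cast; ring_nf
    _ = 2^(n+2) := Real.rpow_natCast 2 (n+2)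
  rw [G2_eq, abs_mul, abs_div, abs_of_pos hR]
  apply mul_le_mul _ le_rfl hR.le (by positivity)
  rw [abs_mul]
  rw [abs_of_pos (Real.rpow_pos_of_pos (by norm_num) _), abs_of_pos Real.pi_pos]
  apply div_le_div₀ (by positivity) (mul_le_mul_of_nonneg_right hpow Real.pi_pos.le) hm hsin

include ha0 ha2 ha1 hb1 in
lemma abs_G3_le (n : ℕ) : |G3 a b n| ≤ 2^(n+2) * π / m0 a * R3 a b n := by
  have hm := m0_pos ha0 ha2 ha1
  have hR := R3_pos ha0 ha2 hb1 n
  have hcos := m0_le_cos a n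
  have hpow : ((2:ℝ) ^ (a + (n:ℝ))) ≤ 2^(n+2) := by
    calc ((2:ℝ) ^ (a + (n:ℝ))) ≤ (2:ℝ) ^ (((n:ℝ)+2)) := by
          apply Real.rpow_le_rpow_of_exponent_le (by norm_num)
          linarith
    _ = ((2:ℝ))^((n+2:ℕ):ℝ) := by push_cast; ring_nf
    _ = 2^(n+2) := Real.rpow_natCast 2 (n+2)
  rw [G3_eq, abs_mul, abs_neg, abs_div, abs_of_pos hR]
  apply mul_le_mul _ le_rfl hR.le (by positivity)
  rw [abs_mul]
  rw [abs_of_pos (Real.rpow_pos_of_pos (by norm_num) _), abs_of_pos Real.pi_pos]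
  apply div_le_div₀ (by positivity) (mul_le_mul_of_nonneg_right hpow Real.pi_pos.le) hm hcos

end

noncomputable def bnd (a b : ℝ) (n : ℕ) : ℝ :=
  ((n:ℝ)+1) * (2^(n+2) * π / m0 a * (R2 a b n + R3 a b n)) *
    ((1/1000:ℝ)^n * (2 * exp ((n:ℝ) + Cab a b)))

section
variable {a b : ℝ} (ha0 : 0 < a) (ha2 : a < 2) (ha1 : a ≠ 1) (hb1 : (a-1)/2 < b)
  (hb2 : b ≤ 3/2)

include ha0 ha2 ha1 hb1 in
lemma bnd_nonneg (n : ℕ) : 0 ≤ bnd a b n := by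
  have hm := m0_pos ha0 ha2 ha1
  have h2 := R2_pos ha0 ha2 hb1 n
  have h3 := R3_pos ha0 ha2 hb1 n
  have := Real.exp_pos ((n:ℝ) + Cab a b)
  rw [bnd]; positivity

include ha0 ha2 ha1 hb1 in
lemma term_bnd {X : ℝ} (hX : (10:ℝ)^6 ≤ X) (n : ℕ) :
    |X ^ (a/2) * (coeffB a b n * hfun a b n X)| ≤ bnd a b n := by
  have hb0 : -(1/2:ℝ) < b := by linarith
  have hX0 : (0:ℝ) < X := lt_of_lt_of_le (by norm_num) hX
  have hX1 : (1:ℝ) ≤ X := by linarith [hX]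
  have hX100 : (100:ℝ) ≤ X := by nlinarith
  have hm := m0_pos ha0 ha2 ha1
  have hR2 := R2_pos ha0 ha2 hb1 n
  have hR3 := R3_pos ha0 ha2 hb1 n
  have hexpos := Real.exp_pos ((n:ℝ) + Cab a b)
  set A : ℝ := (1/1000:ℝ)^n * (2 * exp ((n:ℝ) + Cab a b)) with hA
  have hApos : 0 < A := by positivity
  have hS2 : |S2 a b n X| ≤ 2 * exp ((n:ℝ) + Cab a b) := abs_series_le (c2c_bound a b n) hX100
  have hS3 : |S3 a b n X| ≤ 2 * exp ((n:ℝ) + Cab a b) := abs_series_le (c3c_bound a b n) hX100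
  have hr2 : X ^ (a/2) * X ^ (-((a + (n:ℝ))/2)) = X ^ (-((n:ℝ)/2)) := by
    rw [← Real.rpow_add hX0]; congr 1; ring
  have hr3 : X ^ (a/2) * X ^ (-((a + (n:ℝ) + 1)/2)) = X ^ (-(((n:ℝ)+1)/2)) := by
    rw [← Real.rpow_add hX0]; congr 1; ring
  have hd2 : X ^ (-((n:ℝ)/2)) ≤ (1/1000:ℝ)^n := rpow_decay hX n
  have hd3 : X ^ (-(((n:ℝ)+1)/2)) ≤ (1/1000:ℝ)^n := by
    calc X ^ (-(((n:ℝ)+1)/2)) ≤ X ^ (-((n:ℝ)/2)) := by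
          apply Real.rpow_le_rpow_of_exponent_le hX1; linarith
    _ ≤ _ := hd2
  have hA2 : X ^ (a/2) * |f2 a b n X| ≤ A := by
    rw [f2_eq, abs_mul, abs_of_pos (Real.rpow_pos_of_pos hX0 _), ← mul_assoc, hr2, hA]
    apply mul_le_mul hd2 hS2 (abs_nonneg _) (by positivity)
  have hA3 : X ^ (a/2) * |f3 a b n X| ≤ A := by
    rw [f3_eq, abs_mul, abs_of_pos (Real.rpow_pos_of_pos hX0 _), ← mul_assoc, hr3, hA]
    apply mul_le_mul hd3 hS3 (abs_nonneg _) (by positivity)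
  have hG2 := abs_G2_le ha0 ha2 ha1 hb1 n
  have hG3 := abs_G3_le ha0 ha2 ha1 hb1 n
  have hh : X ^ (a/2) * |hfun a b n X| ≤ (2^(n+2) * π / m0 a * (R2 a b n + R3 a b n)) * A := by
    calc X ^ (a/2) * |hfun a b n X|
        ≤ X ^ (a/2) * (|G2 a b n| * |f2 a b n X| + |G3 a b n| * |f3 a b n X|) := by
          apply mul_le_mul_of_nonneg_left _ (Real.rpow_nonneg hX0.le _)
          rw [hfun]
          calc |G2 a b n * f2 a b n X + G3 a b n * f3 a b n X|
              ≤ |G2 a b n * f2 a b n X| + |G3 a b n * f3 a b n X| := abs_add_le _ _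
          _ = |G2 a b n| * |f2 a b n X| + |G3 a b n| * |f3 a b n X| := by
              rw [abs_mul, abs_mul]
    _ = |G2 a b n| * (X ^ (a/2) * |f2 a b n X|) + |G3 a b n| * (X ^ (a/2) * |f3 a b n X|) := by
        ring
    _ ≤ (2^(n+2) * π / m0 a * R2 a b n) * A + (2^(n+2) * π / m0 a * R3 a b n) * A := by
        apply add_le_add
        · exact mul_le_mul hG2 hA2 (by positivity) (by positivity)
        · exact mul_le_mul hG3 hA3 (by positivity) (by positivity)
    _ = (2^(n+2) * π / m0 a * (R2 a b n + R3 a b n)) * A := by ring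
  calc |X ^ (a/2) * (coeffB a b n * hfun a b n X)|
      = |coeffB a b n| * (X ^ (a/2) * |hfun a b n X|) := by
        rw [abs_mul, abs_mul, abs_of_pos (Real.rpow_pos_of_pos hX0 _)]; ring
  _ ≤ ((n:ℝ)+1) * ((2^(n+2) * π / m0 a * (R2 a b n + R3 a b n)) * A) := by
      apply mul_le_mul (abs_coeffB_le ha0 ha2 hb0 n) hh (by positivity) (by positivity)
  _ = bnd a b n := by rw [bnd]; ring

include ha0 ha2 ha1 hb1 hb2 in
set_option maxHeartbeats 1000000 in
lemma summable_bnd : Summable (bnd a b) := by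
  have hb0 : -(1/2:ℝ) < b := by linarith
  have hm := m0_pos ha0 ha2 ha1
  set r : ℝ := (4 * exp 1)/1000 with hr
  have hr0 : 0 < r := by positivity
  have hr1 : r < 1 := by
    rw [hr, div_lt_one (by norm_num)]
    nlinarith [Real.exp_one_lt_d9]
  set Q : ℝ := 16 * π / m0 a * exp (Cab a b) with hQ
  have hQ0 : 0 < Q := by positivity
  have hg : Summable (fun n : ℕ => Q * ((n:ℝ)+2)^11 * r^n) := by
    have h1 : Summable (fun n : ℕ => ((n:ℝ))^11 * r^n) := by
      have := summable_pow_mul_geometric_of_norm_lt_one 11 (r := r)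
        (by rw [Real.norm_eq_abs, abs_of_pos hr0]; exact hr1)
      exact this
    have h2 : Summable (fun n : ℕ => (((n+2:ℕ)):ℝ)^11 * r^(n+2)) :=
      (summable_nat_add_iff 2).mpr h1
    have h3 : Summable (fun n : ℕ => (r⁻¹^2 * Q) * ((((n+2:ℕ)):ℝ)^11 * r^(n+2))) :=
      h2.mul_left _
    apply h3.congr
    intro n
    have hrne : r ≠ 0 := ne_of_gt hr0
    push_cast
    rw [pow_add]
    field_simp
  apply (summable_nat_add_iff 6).mp
  apply Summable.of_nonneg_of_le (fun k => bnd_nonneg ha0 ha2 ha1 hb1 (k+6))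
    (fun k => ?_) ((summable_nat_add_iff 6).mpr hg)
  generalize hkn : k + 6 = n
  have hn : 6 ≤ n := by omega
  -- now show bnd a b n ≤ Q * ((n:ℝ)+2)^11 * r^n
  have hmr : ((n/2 : ℕ):ℝ) ≤ (n:ℝ)/2 := by
    have := Nat.cast_div_le (α := ℝ) (m := n) (n := 2)
    simpa using this
  have hRle2 : R2 a b n ≤ ((n:ℝ)+2)^10 * 2^n := by
    have := gamma_ratio_le ha0 ha2 hb0 hb2 hn
      (p := 3/2 + ((n:ℝ) - a)/2) (q := b + 1 + ((n:ℝ) - a)/2) (by linarith) (by linarith)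
    exact this
  have hRle3 : R3 a b n ≤ ((n:ℝ)+2)^10 * 2^n := by
    have := gamma_ratio_le ha0 ha2 hb0 hb2 hn
      (p := 1 + ((n:ℝ) - a)/2) (q := b + 1/2 + ((n:ℝ) - a)/2) (by linarith) (by linarith)
    exact this
  have hsplit : exp ((n:ℝ) + Cab a b) = exp (Cab a b) * (exp 1)^n := by
    rw [← Real.exp_nat_mul, ← Real.exp_add]
    congr 1; push_cast; ring
  have h4n : (4:ℝ)^n = 2^n * 2^n := by rw [← mul_pow]; norm_num
  have step1 : bnd a b n ≤
      ((n:ℝ)+1) * (2^(n+2) * π / m0 a * (2 * (((n:ℝ)+2)^10 * 2^n))) *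
        ((1/1000:ℝ)^n * (2 * exp ((n:ℝ) + Cab a b))) := by
    rw [bnd]
    apply mul_le_mul_of_nonneg_right _ (by positivity)
    apply mul_le_mul_of_nonneg_left _ (by positivity)
    apply mul_le_mul_of_nonneg_left _ (by positivity)
    linarith
  have step2 : ((n:ℝ)+1) * (2^(n+2) * π / m0 a * (2 * (((n:ℝ)+2)^10 * 2^n))) *
        ((1/1000:ℝ)^n * (2 * exp ((n:ℝ) + Cab a b)))
      = Q * (((n:ℝ)+1) * ((n:ℝ)+2)^10) * r^n := by
    rw [hsplit, hQ, hr, pow_add]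
    rw [show ((1:ℝ)/1000)^n = 1/1000^n by rw [div_pow, one_pow]]
    rw [show ((4*exp 1)/1000 : ℝ)^n = (2^n * 2^n * (exp 1)^n)/1000^n by
      rw [div_pow, mul_pow, ← h4n]]
    field_simp
    ring
  have step3 : Q * (((n:ℝ)+1) * ((n:ℝ)+2)^10) * r^n ≤ Q * ((n:ℝ)+2)^11 * r^n := by
    apply mul_le_mul_of_nonneg_right _ (by positivity)
    apply mul_le_mul_of_nonneg_left _ hQ0.le
    calc ((n:ℝ)+1) * ((n:ℝ)+2)^10 ≤ ((n:ℝ)+2) * ((n:ℝ)+2)^10 := by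
          apply mul_le_mul_of_nonneg_right (by linarith) (by positivity)
    _ = ((n:ℝ)+2)^11 := by ring
  linarith [step1, step3, le_of_eq step2]

end

section
variable {a b : ℝ} (ha0 : 0 < a) (ha2 : a < 2) (ha1 : a ≠ 1) (hb1 : (a-1)/2 < b)
  (hb2 : b ≤ 3/2)

lemma coeffB_zero (a b : ℝ) : coeffB a b 0 = 1 := by simp [coeffB, poch_zero]

lemma S2_tendsto (a b : ℝ) (n : ℕ) : Tendsto (fun X => S2 a b n X) atTop (𝓝 1) := by
  have h := tendsto_series (c2c_bound a b n)
  rwa [c2c_zero] at h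

lemma S3_tendsto (a b : ℝ) (n : ℕ) : Tendsto (fun X => S3 a b n X) atTop (𝓝 1) := by
  have h := tendsto_series (c3c_bound a b n)
  rwa [c3c_zero] at h

lemma rpow_mul_S2_tendsto (a b : ℝ) (n : ℕ) :
    Tendsto (fun X : ℝ => X ^ (-((n:ℝ)/2)) * S2 a b n X) atTop
      (𝓝 (if n = 0 then 1 else 0)) := by
  cases n with
  | zero =>
      simp only [Nat.cast_zero, zero_div, neg_zero, Real.rpow_zero, one_mul, if_pos]
      exact S2_tendsto a b 0
  | succ k =>
      simp only [Nat.succ_ne_zero, if_false]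
      have h1 : Tendsto (fun X : ℝ => X ^ (-(((k:ℝ)+1)/2))) atTop (𝓝 (0:ℝ)) :=
        tendsto_rpow_neg_atTop (by positivity)
      have h2 := h1.mul (S2_tendsto a b (k+1))
      rw [zero_mul] at h2
      apply h2.congr
      intro X
      congr 2
      push_cast; ring

lemma rpow_mul_S3_tendsto (a b : ℝ) (n : ℕ) :
    Tendsto (fun X : ℝ => X ^ (-(((n:ℝ)+1)/2)) * S3 a b n X) atTop (𝓝 0) := by
  have h1 : Tendsto (fun X : ℝ => X ^ (-(((n:ℝ)+1)/2))) atTop (𝓝 (0:ℝ)) :=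
    tendsto_rpow_neg_atTop (by positivity)
  have h2 := h1.mul (S3_tendsto a b n)
  rw [zero_mul] at h2
  exact h2

lemma term_eq1 (a b : ℝ) (n : ℕ) {X : ℝ} (hX0 : 0 < X) :
    X ^ (a/2) * (coeffB a b n * hfun a b n X) =
      coeffB a b n * G2 a b n * (X ^ (-((n:ℝ)/2)) * S2 a b n X) +
      coeffB a b n * G3 a b n * (X ^ (-(((n:ℝ)+1)/2)) * S3 a b n X) := by
  have e2 : X ^ (a/2) * X ^ (-((a + (n:ℝ))/2)) = X ^ (-((n:ℝ)/2)) := by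
    rw [← Real.rpow_add hX0]; congr 1; ring
  have e3 : X ^ (a/2) * X ^ (-((a + (n:ℝ) + 1)/2)) = X ^ (-(((n:ℝ)+1)/2)) := by
    rw [← Real.rpow_add hX0]; congr 1; ring
  rw [hfun, f2_eq, f3_eq]
  calc X ^ (a/2) * (coeffB a b n *
        (G2 a b n * (X ^ (-((a + (n:ℝ))/2)) * S2 a b n X) +
         G3 a b n * (X ^ (-((a + (n:ℝ) + 1)/2)) * S3 a b n X)))
      = coeffB a b n * G2 a b n * ((X ^ (a/2) * X ^ (-((a + (n:ℝ))/2))) * S2 a b n X) +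
        coeffB a b n * G3 a b n * ((X ^ (a/2) * X ^ (-((a + (n:ℝ) + 1)/2))) * S3 a b n X) := by
        ring
  _ = _ := by rw [e2, e3]

lemma term_tendsto1 (a b : ℝ) (n : ℕ) :
    Tendsto (fun X : ℝ => X ^ (a/2) * (coeffB a b n * hfun a b n X)) atTop
      (𝓝 (if n = 0 then G2 a b 0 else 0)) := by
  have hlim : Tendsto (fun X : ℝ =>
      coeffB a b n * G2 a b n * (X ^ (-((n:ℝ)/2)) * S2 a b n X) +
      coeffB a b n * G3 a b n * (X ^ (-(((n:ℝ)+1)/2)) * S3 a b n X)) atTop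
      (𝓝 (coeffB a b n * G2 a b n * (if n = 0 then 1 else 0) +
           coeffB a b n * G3 a b n * 0)) :=
    ((rpow_mul_S2_tendsto a b n).const_mul _).add
      ((rpow_mul_S3_tendsto a b n).const_mul _)
  have heq : (fun X : ℝ => X ^ (a/2) * (coeffB a b n * hfun a b n X)) =ᶠ[atTop]
      (fun X : ℝ =>
      coeffB a b n * G2 a b n * (X ^ (-((n:ℝ)/2)) * S2 a b n X) +
      coeffB a b n * G3 a b n * (X ^ (-(((n:ℝ)+1)/2)) * S3 a b n X)) := by
    filter_upwards [eventually_gt_atTop (0:ℝ)] with X hX0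
    exact term_eq1 a b n hX0
  have := hlim.congr' heq.symm
  cases n with
  | zero => simpa [coeffB_zero] using this
  | succ k => simpa using this

include ha0 ha2 ha1 hb1 hb2 in
lemma part1 : Tendsto (fun X : ℝ => X ^ (a/2) * Sfun a b X) atTop (𝓝 (G2 a b 0)) := by
  have h := tendsto_tsum_of_dominated_convergence (𝓕 := atTop)
    (f := fun (X : ℝ) (n : ℕ) => X ^ (a/2) * (coeffB a b n * hfun a b n X))
    (g := fun n => if n = 0 then G2 a b 0 else 0) (bound := bnd a b)
    (summable_bnd ha0 ha2 ha1 hb1 hb2) (fun n => term_tendsto1 a b n) ?_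
  · have heq : ∑' n : ℕ, (if n = 0 then G2 a b 0 else 0) = G2 a b 0 :=
      tsum_ite_eq 0 (fun _ => G2 a b 0)
    rw [heq] at h
    apply h.congr
    intro X
    exact tsum_mul_left
  · filter_upwards [eventually_ge_atTop ((10:ℝ)^6)] with X hX n
    rw [Real.norm_eq_abs]
    exact term_bnd ha0 ha2 ha1 hb1 hX n

end

noncomputable def bnd2 (a b : ℝ) (n : ℕ) : ℝ :=
  if n = 0 then |G2 a b 0| * (70 * exp (Cab a b)) + |G3 a b 0| * (2 * exp (Cab a b))
  else 1000 * bnd a b n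

noncomputable def gp (a b : ℝ) (n : ℕ) (X : ℝ) : ℝ :=
  X ^ ((a+1)/2) * (coeffB a b n * hfun a b n X) -
    (if n = 0 then G2 a b 0 * X ^ ((1:ℝ)/2) else 0)

section
variable {a b : ℝ} (ha0 : 0 < a) (ha2 : a < 2) (ha1 : a ≠ 1) (hb1 : (a-1)/2 < b)
  (hb2 : b ≤ 3/2)

lemma term_eq2 (a b : ℝ) (n : ℕ) {X : ℝ} (hX0 : 0 < X) :
    X ^ ((a+1)/2) * (coeffB a b n * hfun a b n X) =
      coeffB a b n * G2 a b n * (X ^ (-(((n:ℝ)-1)/2)) * S2 a b n X) +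
      coeffB a b n * G3 a b n * (X ^ (-((n:ℝ)/2)) * S3 a b n X) := by
  have e2 : X ^ ((a+1)/2) * X ^ (-((a + (n:ℝ))/2)) = X ^ (-(((n:ℝ)-1)/2)) := by
    rw [← Real.rpow_add hX0]; congr 1; ring
  have e3 : X ^ ((a+1)/2) * X ^ (-((a + (n:ℝ) + 1)/2)) = X ^ (-((n:ℝ)/2)) := by
    rw [← Real.rpow_add hX0]; congr 1; ring
  rw [hfun, f2_eq, f3_eq]
  calc X ^ ((a+1)/2) * (coeffB a b n *
        (G2 a b n * (X ^ (-((a + (n:ℝ))/2)) * S2 a b n X) +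
         G3 a b n * (X ^ (-((a + (n:ℝ) + 1)/2)) * S3 a b n X)))
      = coeffB a b n * G2 a b n * ((X ^ ((a+1)/2) * X ^ (-((a + (n:ℝ))/2))) * S2 a b n X) +
        coeffB a b n * G3 a b n * ((X ^ ((a+1)/2) * X ^ (-((a + (n:ℝ) + 1)/2))) * S3 a b n X) := by
        ring
  _ = _ := by rw [e2, e3]

lemma gp_zero_eq (a b : ℝ) {X : ℝ} (hX0 : 0 < X) :
    gp a b 0 X = G2 a b 0 * (X ^ ((1:ℝ)/2) * (S2 a b 0 X - 1)) + G3 a b 0 * S3 a b 0 X := by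
  rw [gp, if_pos rfl, term_eq2 a b 0 hX0, coeffB_zero]
  norm_num
  ring

include ha0 ha2 ha1 hb1 in
lemma term_bnd2 {X : ℝ} (hX : (10:ℝ)^6 ≤ X) {n : ℕ} (hn : 1 ≤ n) :
    |X ^ ((a+1)/2) * (coeffB a b n * hfun a b n X)| ≤ 1000 * bnd a b n := by
  obtain ⟨k, rfl⟩ : ∃ k, n = k + 1 := ⟨n - 1, by omega⟩
  have hb0 : -(1/2:ℝ) < b := by linarith
  have hX0 : (0:ℝ) < X := lt_of_lt_of_le (by norm_num) hX
  have hX1 : (1:ℝ) ≤ X := by nlinarith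
  have hX100 : (100:ℝ) ≤ X := by nlinarith
  have hm := m0_pos ha0 ha2 ha1
  have hR2 := R2_pos ha0 ha2 hb1 (k+1)
  have hR3 := R3_pos ha0 ha2 hb1 (k+1)
  have hexpos := Real.exp_pos (((k+1:ℕ):ℝ) + Cab a b)
  set A : ℝ := 1000 * (1/1000:ℝ)^(k+1) * (2 * exp (((k+1:ℕ):ℝ) + Cab a b)) with hA
  have hApos : 0 < A := by positivity
  have hS2 : |S2 a b (k+1) X| ≤ 2 * exp (((k+1:ℕ):ℝ) + Cab a b) :=
    abs_series_le (c2c_bound a b (k+1)) hX100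
  have hS3 : |S3 a b (k+1) X| ≤ 2 * exp (((k+1:ℕ):ℝ) + Cab a b) :=
    abs_series_le (c3c_bound a b (k+1)) hX100
  have hr2 : X ^ ((a+1)/2) * X ^ (-((a + ((k+1:ℕ):ℝ))/2)) = X ^ (-((k:ℝ)/2)) := by
    rw [← Real.rpow_add hX0]; congr 1; push_cast; ring
  have hr3 : X ^ ((a+1)/2) * X ^ (-((a + ((k+1:ℕ):ℝ) + 1)/2)) = X ^ (-(((k:ℝ)+1)/2)) := by
    rw [← Real.rpow_add hX0]; congr 1; push_cast; ring
  have hd2 : X ^ (-((k:ℝ)/2)) ≤ 1000 * (1/1000:ℝ)^(k+1) := by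
    have h := rpow_decay hX k
    have he : (1000:ℝ) * (1/1000:ℝ)^(k+1) = (1/1000:ℝ)^k := by
      rw [pow_succ]; ring
    rw [he]; exact h
  have hd3 : X ^ (-(((k:ℝ)+1)/2)) ≤ 1000 * (1/1000:ℝ)^(k+1) := by
    have h := rpow_decay hX (k+1)
    calc X ^ (-(((k:ℝ)+1)/2)) = X ^ (-(((k+1:ℕ):ℝ))/2) := by congr 1; push_cast; ring
    _ ≤ (1/1000:ℝ)^(k+1) := by
        have : X ^ (-(((k+1:ℕ):ℝ))/2) = X ^ (-((((k+1:ℕ)):ℝ)/2)) := by congr 1; ring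
        rw [this]; exact h
    _ ≤ 1000 * (1/1000:ℝ)^(k+1) := by nlinarith [pow_pos (show (0:ℝ) < 1/1000 by norm_num) (k+1)]
  have hA2 : X ^ ((a+1)/2) * |f2 a b (k+1) X| ≤ A := by
    rw [f2_eq, abs_mul, abs_of_pos (Real.rpow_pos_of_pos hX0 _), ← mul_assoc, hr2, hA]
    apply mul_le_mul hd2 hS2 (abs_nonneg _) (by positivity)
  have hA3 : X ^ ((a+1)/2) * |f3 a b (k+1) X| ≤ A := by
    rw [f3_eq, abs_mul, abs_of_pos (Real.rpow_pos_of_pos hX0 _), ← mul_assoc, hr3, hA]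
    apply mul_le_mul hd3 hS3 (abs_nonneg _) (by positivity)
  have hG2 := abs_G2_le ha0 ha2 ha1 hb1 (k+1)
  have hG3 := abs_G3_le ha0 ha2 ha1 hb1 (k+1)
  have hh : X ^ ((a+1)/2) * |hfun a b (k+1) X| ≤
      (2^(k+1+2) * π / m0 a * (R2 a b (k+1) + R3 a b (k+1))) * A := by
    calc X ^ ((a+1)/2) * |hfun a b (k+1) X|
        ≤ X ^ ((a+1)/2) * (|G2 a b (k+1)| * |f2 a b (k+1) X| + |G3 a b (k+1)| * |f3 a b (k+1) X|) := by
          apply mul_le_mul_of_nonneg_left _ (Real.rpow_nonneg hX0.le _)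
          rw [hfun]
          calc |G2 a b (k+1) * f2 a b (k+1) X + G3 a b (k+1) * f3 a b (k+1) X|
              ≤ |G2 a b (k+1) * f2 a b (k+1) X| + |G3 a b (k+1) * f3 a b (k+1) X| := abs_add_le _ _
          _ = _ := by rw [abs_mul, abs_mul]
    _ = |G2 a b (k+1)| * (X ^ ((a+1)/2) * |f2 a b (k+1) X|) +
        |G3 a b (k+1)| * (X ^ ((a+1)/2) * |f3 a b (k+1) X|) := by ring
    _ ≤ (2^(k+1+2) * π / m0 a * R2 a b (k+1)) * A + (2^(k+1+2) * π / m0 a * R3 a b (k+1)) * A := by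
        apply add_le_add
        · exact mul_le_mul hG2 hA2 (by positivity) (by positivity)
        · exact mul_le_mul hG3 hA3 (by positivity) (by positivity)
    _ = _ := by ring
  calc |X ^ ((a+1)/2) * (coeffB a b (k+1) * hfun a b (k+1) X)|
      = |coeffB a b (k+1)| * (X ^ ((a+1)/2) * |hfun a b (k+1) X|) := by
        rw [abs_mul, abs_mul, abs_of_pos (Real.rpow_pos_of_pos hX0 _)]; ring
  _ ≤ (((k+1:ℕ):ℝ)+1) * ((2^(k+1+2) * π / m0 a * (R2 a b (k+1) + R3 a b (k+1))) * A) := by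
      apply mul_le_mul (abs_coeffB_le ha0 ha2 hb0 (k+1)) hh (by positivity) (by positivity)
  _ = 1000 * bnd a b (k+1) := by rw [bnd, hA]; ring

include ha0 ha2 ha1 hb1 in
lemma dom2 {X : ℝ} (hX : (10:ℝ)^6 ≤ X) (n : ℕ) : |gp a b n X| ≤ bnd2 a b n := by
  have hX0 : (0:ℝ) < X := lt_of_lt_of_le (by norm_num) hX
  have hX1 : (1:ℝ) ≤ X := by nlinarith
  have hX100 : (100:ℝ) ≤ X := by nlinarith
  cases n with
  | zero =>
      rw [gp_zero_eq a b hX0, bnd2, if_pos rfl]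
      set K : ℝ := exp (((0:ℕ):ℝ) + Cab a b) with hK
      have hKe : K = exp (Cab a b) := by rw [hK]; norm_num
      have hKpos : 0 < K := Real.exp_pos _
      have htail : |S2 a b 0 X - 1| ≤ 70 * K / X :=
        series_tail (c2c_bound a b 0) (c2c_zero a b 0) hX100
      have hS3 : |S3 a b 0 X| ≤ 2 * K := abs_series_le (c3c_bound a b 0) hX100
      have hhalf : X ^ ((1:ℝ)/2) ≤ X := by
        calc X ^ ((1:ℝ)/2) ≤ X ^ (1:ℝ) := by
              apply Real.rpow_le_rpow_of_exponent_le hX1; norm_num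
        _ = X := Real.rpow_one X
      have h1 : X ^ ((1:ℝ)/2) * |S2 a b 0 X - 1| ≤ 70 * K := by
        calc X ^ ((1:ℝ)/2) * |S2 a b 0 X - 1| ≤ X * (70 * K / X) := by
              apply mul_le_mul hhalf htail (abs_nonneg _) hX0.le
        _ = 70 * K := by field_simp
      calc |G2 a b 0 * (X ^ ((1:ℝ)/2) * (S2 a b 0 X - 1)) + G3 a b 0 * S3 a b 0 X|
          ≤ |G2 a b 0 * (X ^ ((1:ℝ)/2) * (S2 a b 0 X - 1))| + |G3 a b 0 * S3 a b 0 X| :=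
            abs_add_le _ _
      _ = |G2 a b 0| * (X ^ ((1:ℝ)/2) * |S2 a b 0 X - 1|) + |G3 a b 0| * |S3 a b 0 X| := by
            rw [abs_mul, abs_mul, abs_mul, abs_of_pos (Real.rpow_pos_of_pos hX0 _)]
      _ ≤ |G2 a b 0| * (70 * K) + |G3 a b 0| * (2 * K) := by
            apply add_le_add
            · exact mul_le_mul_of_nonneg_left h1 (abs_nonneg _)
            · exact mul_le_mul_of_nonneg_left hS3 (abs_nonneg _)
      _ = |G2 a b 0| * (70 * exp (Cab a b)) + |G3 a b 0| * (2 * exp (Cab a b)) := by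
            rw [hKe]
  | succ k =>
      rw [gp, if_neg (Nat.succ_ne_zero k), sub_zero, bnd2, if_neg (Nat.succ_ne_zero k)]
      exact term_bnd2 ha0 ha2 ha1 hb1 hX (by omega)

end

section
variable {a b : ℝ} (ha0 : 0 < a) (ha2 : a < 2) (ha1 : a ≠ 1) (hb1 : (a-1)/2 < b)
  (hb2 : b ≤ 3/2)

noncomputable def Lp (a b : ℝ) (n : ℕ) : ℝ :=
  if n = 0 then G3 a b 0 else if n = 1 then coeffB a b 1 * G2 a b 1 else 0


lemma gp_tendsto_zero (a b : ℝ) : Tendsto (gp a b 0) atTop (𝓝 (G3 a b 0)) := by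
  set K : ℝ := exp (((0:ℕ):ℝ) + Cab a b) with hK
  have hKpos : 0 < K := Real.exp_pos _
  have h1 : Tendsto (fun X : ℝ => X ^ ((1:ℝ)/2) * (S2 a b 0 X - 1)) atTop (𝓝 0) := by
    apply squeeze_zero_norm' (a := fun X : ℝ => 70 * K * X ^ (-((1:ℝ)/2)))
    · filter_upwards [eventually_ge_atTop (100:ℝ)] with X hX100
      have hX0 : (0:ℝ) < X := by linarith
      have htail : |S2 a b 0 X - 1| ≤ 70 * K / X :=
        series_tail (c2c_bound a b 0) (c2c_zero a b 0) hX100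
      rw [Real.norm_eq_abs, abs_mul, abs_of_pos (Real.rpow_pos_of_pos hX0 _)]
      calc X ^ ((1:ℝ)/2) * |S2 a b 0 X - 1| ≤ X ^ ((1:ℝ)/2) * (70 * K / X) := by
            apply mul_le_mul_of_nonneg_left htail (Real.rpow_nonneg hX0.le _)
      _ = 70 * K * X ^ (-((1:ℝ)/2)) := by
            have hxx : X ^ ((1:ℝ)/2) / X = X ^ (-((1:ℝ)/2)) := by
              rw [div_eq_mul_inv, ← Real.rpow_neg_one X, ← Real.rpow_add hX0]
              norm_num
            rw [← hxx]; ring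
    · have := (tendsto_rpow_neg_atTop (show (0:ℝ) < 1/2 by norm_num)).const_mul (70*K)
      simpa using this
  have h2 := (h1.const_mul (G2 a b 0)).add ((S3_tendsto a b 0).const_mul (G3 a b 0))
  simp only [mul_zero, zero_add, mul_one] at h2
  have heq : (fun X : ℝ => G2 a b 0 * (X ^ ((1:ℝ)/2) * (S2 a b 0 X - 1)) + G3 a b 0 * S3 a b 0 X)
      =ᶠ[atTop] gp a b 0 := by
    filter_upwards [eventually_gt_atTop (0:ℝ)] with X hX0
    exact (gp_zero_eq a b hX0).symm
  exact h2.congr' heq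

lemma rpow_mul_S2_tendsto' (a b : ℝ) (k : ℕ) :
    Tendsto (fun X : ℝ => X ^ (-((k:ℝ)/2)) * S2 a b (k+1) X) atTop
      (𝓝 (if k = 0 then 1 else 0)) := by
  cases k with
  | zero =>
      simp only [Nat.cast_zero, zero_div, neg_zero, Real.rpow_zero, one_mul, if_pos]
      exact S2_tendsto a b 1
  | succ j =>
      simp only [Nat.succ_ne_zero, if_false]
      have h1 : Tendsto (fun X : ℝ => X ^ (-(((j:ℝ)+1)/2))) atTop (𝓝 (0:ℝ)) :=
        tendsto_rpow_neg_atTop (by positivity)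
      have h2 := h1.mul (S2_tendsto a b (j+2))
      rw [zero_mul] at h2
      apply h2.congr
      intro X
      congr 3
      push_cast; ring

lemma gp_tendsto_succ (a b : ℝ) (k : ℕ) :
    Tendsto (gp a b (k+1)) atTop (𝓝 (if k = 0 then coeffB a b 1 * G2 a b 1 else 0)) := by
  have hS3' : Tendsto (fun X : ℝ => X ^ (-(((k:ℝ)+1)/2)) * S3 a b (k+1) X) atTop (𝓝 0) := by
    have h1 : Tendsto (fun X : ℝ => X ^ (-(((k:ℝ)+1)/2))) atTop (𝓝 (0:ℝ)) :=
      tendsto_rpow_neg_atTop (by positivity)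
    have h2 := h1.mul (S3_tendsto a b (k+1))
    rwa [zero_mul] at h2
  have hlim := ((rpow_mul_S2_tendsto' a b k).const_mul (coeffB a b (k+1) * G2 a b (k+1))).add
    (hS3'.const_mul (coeffB a b (k+1) * G3 a b (k+1)))
  rw [mul_zero, add_zero] at hlim
  have heq : (fun X : ℝ =>
      coeffB a b (k+1) * G2 a b (k+1) * (X ^ (-((k:ℝ)/2)) * S2 a b (k+1) X) +
      coeffB a b (k+1) * G3 a b (k+1) * (X ^ (-(((k:ℝ)+1)/2)) * S3 a b (k+1) X))
      =ᶠ[atTop] gp a b (k+1) := by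
    filter_upwards [eventually_gt_atTop (0:ℝ)] with X hX0
    rw [gp, if_neg (Nat.succ_ne_zero k), sub_zero, term_eq2 a b (k+1) hX0]
    congr 3
    · congr 1; push_cast; ring
    · congr 1; push_cast; ring
  have h := hlim.congr' heq
  cases k with
  | zero => simpa using h
  | succ j =>
      simp only [Nat.succ_ne_zero, if_false] at h ⊢
      simpa using h

lemma gp_tendsto (a b : ℝ) (n : ℕ) : Tendsto (gp a b n) atTop (𝓝 (Lp a b n)) := by
  cases n with
  | zero => rw [Lp, if_pos rfl]; exact gp_tendsto_zero a b
  | succ k =>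
      rw [Lp, if_neg (Nat.succ_ne_zero k)]
      have := gp_tendsto_succ a b k
      cases k with
      | zero => simpa using this
      | succ j => simpa using this

include ha0 ha2 ha1 hb1 hb2 in
lemma summable_bnd2 : Summable (bnd2 a b) := by
  apply (summable_nat_add_iff 1).mp
  have h : Summable (fun k : ℕ => 1000 * bnd a b (k+1)) :=
    (summable_nat_add_iff 1).mpr ((summable_bnd ha0 ha2 ha1 hb1 hb2).mul_left 1000)
  apply h.congr
  intro k
  rw [bnd2, if_neg (Nat.succ_ne_zero k)]

lemma tsum_Lp (a b : ℝ) : ∑' n, Lp a b n = G3 a b 0 + coeffB a b 1 * G2 a b 1 := by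
  have hfe : Lp a b = fun n => (if n = 0 then G3 a b 0 else 0) +
      (if n = 1 then coeffB a b 1 * G2 a b 1 else 0) := by
    funext n
    match n with
    | 0 => simp [Lp]
    | 1 => simp [Lp]
    | (j+2) => simp [Lp]
  rw [hfe, Summable.tsum_add ⟨_, hasSum_ite_eq 0 _⟩ ⟨_, hasSum_ite_eq 1 _⟩,
    tsum_ite_eq 0 (fun _ => G3 a b 0), tsum_ite_eq 1 (fun _ => coeffB a b 1 * G2 a b 1)]

include ha0 ha2 ha1 hb1 hb2 in
lemma part2 : Tendsto
      (fun X : ℝ => X ^ ((a + 1) / 2) * (Sfun a b X - G2 a b 0 * X ^ (-(a / 2))))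
      atTop (𝓝 (G3 a b 0 + coeffB a b 1 * G2 a b 1)) := by
  have h := tendsto_tsum_of_dominated_convergence (𝓕 := atTop)
    (f := fun (X : ℝ) (n : ℕ) => gp a b n X) (g := Lp a b) (bound := bnd2 a b)
    (summable_bnd2 ha0 ha2 ha1 hb1 hb2) (gp_tendsto a b) ?_
  · rw [tsum_Lp] at h
    apply h.congr'
    filter_upwards [eventually_ge_atTop ((10:ℝ)^6)] with X hX
    have hX0 : (0:ℝ) < X := lt_of_lt_of_le (by norm_num) hX
    have hsumF : Summable (fun n => X ^ ((a+1)/2) * (coeffB a b n * hfun a b n X)) := by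
      apply (summable_nat_add_iff 1).mp
      apply Summable.of_norm_bounded
        ((summable_nat_add_iff 1).mpr ((summable_bnd ha0 ha2 ha1 hb1 hb2).mul_left 1000))
      intro k
      rw [Real.norm_eq_abs]
      exact term_bnd2 ha0 ha2 ha1 hb1 hX (by omega)
    have hsumI : Summable (fun n : ℕ => if n = 0 then G2 a b 0 * X ^ ((1:ℝ)/2) else 0) :=
      ⟨_, hasSum_ite_eq 0 _⟩
    have hsplit : ∑' n, gp a b n X =
        (∑' n, X ^ ((a+1)/2) * (coeffB a b n * hfun a b n X)) -
        (∑' n : ℕ, if n = 0 then G2 a b 0 * X ^ ((1:ℝ)/2) else 0) := by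
      rw [← Summable.tsum_sub hsumF hsumI]
      rfl
    rw [hsplit, tsum_mul_left, tsum_ite_eq 0 (fun _ => G2 a b 0 * X ^ ((1:ℝ)/2))]
    have he : X ^ ((a+1)/2) * X ^ (-(a/2)) = X ^ ((1:ℝ)/2) := by
      rw [← Real.rpow_add hX0]; congr 1; ring
    rw [show X ^ ((a+1)/2) * (Sfun a b X - G2 a b 0 * X ^ (-(a/2))) =
      X ^ ((a+1)/2) * Sfun a b X - G2 a b 0 * (X ^ ((a+1)/2) * X ^ (-(a/2))) by ring, he, Sfun]
  · filter_upwards [eventually_ge_atTop ((10:ℝ)^6)] with X hX n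
    rw [Real.norm_eq_abs]
    exact dom2 ha0 ha2 ha1 hb1 hX n

end

set_option maxHeartbeats 2000000 in
lemma Gidentity {a b : ℝ} (ha0 : 0 < a) (ha2 : a < 2) (ha1 : a ≠ 1) (hb1 : (a-1)/2 < b) :
    G3 a b 0 + coeffB a b 1 * G2 a b 1 =
      G2 a b 0 * ((a - 1) * Real.tan (Real.pi * a / 2) *
        (Real.Gamma ((3 - a) / 2) * Real.Gamma (b + 2 - a / 2) /
          (Real.Gamma (2 - a / 2) * Real.Gamma (b + 3 / 2 - a / 2)))) := by
  have hπ := Real.pi_pos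
  set s := Real.sin (π*(a/2)) with hs_def
  set c := Real.cos (π*(a/2)) with hc_def
  have hs : s ≠ 0 := by
    apply ne_of_gt
    apply Real.sin_pos_of_pos_of_lt_pi <;> nlinarith
  have hc : c ≠ 0 := by
    rcases lt_or_gt_of_ne ha1 with h | h
    · exact ne_of_gt (Real.cos_pos_of_mem_Ioo ⟨by nlinarith, by nlinarith⟩)
    · exact ne_of_lt (Real.cos_neg_of_pi_div_two_lt_of_lt (by nlinarith) (by nlinarith))
  -- gamma atoms
  set ga := Real.Gamma a with hga_def
  set g32 := Real.Gamma (3/2) with hg32_def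
  set gb1 := Real.Gamma (b+1) with hgb1_def
  set gA := Real.Gamma (3/2 - a/2) with hgA_def
  set gB := Real.Gamma (b+1-a/2) with hgB_def
  set gC := Real.Gamma (1-a/2) with hgC_def
  set gD := Real.Gamma (b+1/2-a/2) with hgD_def
  have hb0 : -(1/2:ℝ) < b := by linarith
  have hga : ga ≠ 0 := ne_of_gt (Real.Gamma_pos_of_pos ha0)
  have hg32 : g32 ≠ 0 := ne_of_gt (Real.Gamma_pos_of_pos (by norm_num))
  have hgb1 : gb1 ≠ 0 := ne_of_gt (Real.Gamma_pos_of_pos (by linarith))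
  have hgA : gA ≠ 0 := ne_of_gt (Real.Gamma_pos_of_pos (by linarith))
  have hgB : gB ≠ 0 := ne_of_gt (Real.Gamma_pos_of_pos (by linarith))
  have hgC : gC ≠ 0 := ne_of_gt (Real.Gamma_pos_of_pos (by linarith))
  have hgD : gD ≠ 0 := ne_of_gt (Real.Gamma_pos_of_pos (by linarith))
  have h1a : (1:ℝ) - a/2 ≠ 0 := by intro h; apply ha2.ne; linarith
  have hbD : b + 1/2 - a/2 ≠ 0 := by intro h; nlinarith
  have hbB : b + 1 - a/2 ≠ 0 := by intro h; nlinarith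
  -- trig rewrites
  have hsin0 : Real.sin (Real.pi * ((a + (0:ℕ))/2)) = s := by
    rw [hs_def]; congr 1; push_cast; ring
  have hcos0 : Real.cos (Real.pi * ((a + (0:ℕ))/2)) = c := by
    rw [hc_def]; congr 1; push_cast; ring
  have hsin1 : Real.sin (Real.pi * ((a + (1:ℕ))/2)) = c := by
    rw [hc_def, show Real.pi * ((a + ((1:ℕ):ℝ))/2) = Real.pi*(a/2) + Real.pi/2 by push_cast; ring,
      Real.sin_add_pi_div_two]
  have htan : Real.tan (Real.pi * a / 2) = s/c := by
    rw [show Real.pi * a / 2 = Real.pi * (a/2) by ring, Real.tan_eq_sin_div_cos]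
  -- Gamma arg rewrites for G2 a b 0 / G3 a b 0 / G2 a b 1
  have e1 : Real.Gamma ((0:ℕ) + 3/2) = g32 := by rw [hg32_def]; norm_num
  have e2 : Real.Gamma ((0:ℕ) + b + 1) = gb1 := by rw [hgb1_def]; congr 1; push_cast; ring
  have e3 : Real.Gamma ((0:ℕ) + a) = ga := by rw [hga_def]; congr 1; push_cast; ring
  have e4 : Real.Gamma (3/2 + (((0:ℕ):ℝ) - a)/2) = gA := by rw [hgA_def]; congr 1; push_cast; ring
  have e5 : Real.Gamma (b + 1 + (((0:ℕ):ℝ) - a)/2) = gB := by rw [hgB_def]; congr 1; push_cast; ring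
  have e6 : Real.Gamma (1 + (((0:ℕ):ℝ) - a)/2) = gC := by rw [hgC_def]; congr 1; push_cast; ring
  have e7 : Real.Gamma (b + 1/2 + (((0:ℕ):ℝ) - a)/2) = gD := by rw [hgD_def]; congr 1; push_cast; ring
  have e8 : Real.Gamma ((1:ℕ) + 3/2) = (3/2) * g32 := by
    rw [show (((1:ℕ):ℝ) + 3/2) = 3/2 + 1 by push_cast; ring, Real.Gamma_add_one (by norm_num), hg32_def]
  have e9 : Real.Gamma ((1:ℕ) + b + 1) = (b+1) * gb1 := by
    rw [show (((1:ℕ):ℝ) + b + 1) = (b+1) + 1 by push_cast; ring,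
      Real.Gamma_add_one (by intro h; nlinarith), hgb1_def]
  have e10 : Real.Gamma ((1:ℕ) + a) = a * ga := by
    rw [show (((1:ℕ):ℝ) + a) = a + 1 by push_cast; ring, Real.Gamma_add_one (ne_of_gt ha0), hga_def]
  have e11 : Real.Gamma (3/2 + (((1:ℕ):ℝ) - a)/2) = (1 - a/2) * gC := by
    rw [show (3/2 + (((1:ℕ):ℝ) - a)/2) = (1 - a/2) + 1 by push_cast; ring,
      Real.Gamma_add_one h1a, hgC_def]
  have e12 : Real.Gamma (b + 1 + (((1:ℕ):ℝ) - a)/2) = (b + 1/2 - a/2) * gD := by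
    rw [show (b + 1 + (((1:ℕ):ℝ) - a)/2) = (b + 1/2 - a/2) + 1 by push_cast; ring,
      Real.Gamma_add_one hbD, hgD_def]
  -- RHS gammas
  have e13 : Real.Gamma ((3 - a)/2) = gA := by rw [hgA_def]; congr 1; ring
  have e14 : Real.Gamma (b + 2 - a/2) = (b + 1 - a/2) * gB := by
    rw [show (b + 2 - a/2) = (b + 1 - a/2) + 1 by ring, Real.Gamma_add_one hbB, hgB_def]
  have e15 : Real.Gamma (2 - a/2) = (1 - a/2) * gC := by
    rw [show ((2:ℝ) - a/2) = (1 - a/2) + 1 by ring, Real.Gamma_add_one h1a, hgC_def]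
  have e16 : Real.Gamma (b + 3/2 - a/2) = (b + 1/2 - a/2) * gD := by
    rw [show (b + 3/2 - a/2) = (b + 1/2 - a/2) + 1 by ring, Real.Gamma_add_one hbD, hgD_def]
  -- powers of 2
  have p0 : (2:ℝ) ^ (a + ((0:ℕ):ℝ) - 1) = 2^(a-1) := by congr 1; push_cast; ring
  have p1 : (2:ℝ) ^ (a + ((0:ℕ):ℝ)) = 2^(a-1) * 2 := by
    rw [show (a + ((0:ℕ):ℝ)) = (a-1) + 1 by push_cast; ring, Real.rpow_add_one (by norm_num)]
  have p2 : (2:ℝ) ^ (a + ((1:ℕ):ℝ) - 1) = 2^(a-1) * 2 := by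
    rw [show (a + ((1:ℕ):ℝ) - 1) = (a-1) + 1 by push_cast; ring, Real.rpow_add_one (by norm_num)]
  have hpow : (0:ℝ) < (2:ℝ)^(a-1) := Real.rpow_pos_of_pos (by norm_num) _
  have hfac1 : (Nat.factorial 1 : ℝ) = 1 := by norm_num
  rw [G2, G2, G3, coeffB]
  rw [hsin0, hcos0, hsin1, htan]
  rw [e1, e2, e3, e4, e5, e6, e7, e8, e9, e10, e11, e12, e13, e14, e15, e16]
  rw [p0, p1, p2]
  rw [poch_one, poch_one, poch_one, poch_one, poch_one, hfac1]
  have hπ' : Real.pi ≠ 0 := ne_of_gt hπ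
  have ha' : a ≠ 0 := ne_of_gt ha0
  have hbp : b + 1 ≠ 0 := by intro h; nlinarith
  have hpow' : (2:ℝ)^(a-1) ≠ 0 := ne_of_gt hpow
  generalize hu : (1:ℝ) - a/2 = u
  generalize hv : b + 1/2 - a/2 = v
  generalize hw : b + 1 - a/2 = w
  generalize hp : b + 1 = p
  have hu' : u ≠ 0 := hu ▸ h1a
  have hv' : v ≠ 0 := hv ▸ hbD
  have hw' : w ≠ 0 := hw ▸ hbB
  have hp' : p ≠ 0 := hp ▸ hbp
  field_simp
  rw [← hu, ← hv, ← hw]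
  ring


theorem stmt_9 (a b : ℝ) (ha0 : 0 < a) (ha2 : a < 2) (ha1 : a ≠ 1)
    (hb1 : (a - 1) / 2 < b) (hb2 : b ≤ 3 / 2) :
    Filter.Tendsto (fun X : ℝ => X ^ (a / 2) * Sfun a b X)
      Filter.atTop (nhds (G2 a b 0)) ∧
    Filter.Tendsto
      (fun X : ℝ => X ^ ((a + 1) / 2) * (Sfun a b X - G2 a b 0 * X ^ (-(a / 2))))
      Filter.atTop
      (nhds (G2 a b 0 *
        ((a - 1) * Real.tan (Real.pi * a / 2) *
          (Real.Gamma ((3 - a) / 2) * Real.Gamma (b + 2 - a / 2) /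
            (Real.Gamma (2 - a / 2) * Real.Gamma (b + 3 / 2 - a / 2)))))) := by
  constructor
  · exact part1 ha0 ha2 ha1 hb1 hb2
  · have h := part2 ha0 ha2 ha1 hb1 hb2
    rwa [Gidentity ha0 ha2 ha1 hb1] at h
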